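/- arXiv:1401.7636 — 2 statements merged into one kernel-verified Lean document; each statement's English description precedes it below -/
import Mathlib

section
/- Let V be a finite-dimensional complex vector space, L : V → V linear with ker(λ − L)² = ker(λ − L), and define M(y,z) = (Ly, Lz − y) on V × V. Then the geometric multiplicity of λ for M equals the geometric multiplicity of λ for L, while dim ker(λ − M)² = 2 · dim ker(λ − L). -/
/-- The product of two submodules is linearly equivalent to the product of the submodules. -/
def submoduleProdEquiv {R M N : Type*} [CommRing R] [AddCommGroup M] [AddCommGroup N]
    [Module R M] [Module R N] (p : Submodule R M) (q : Submodule R N) :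
    (p.prod q) ≃ₗ[R] p × q where
  toFun x := (⟨x.1.1, x.2.1⟩, ⟨x.1.2, x.2.2⟩)
  invFun x := ⟨(x.1.1, x.2.1), x.1.2, x.2.2⟩
  map_add' x y := rfl
  map_smul' c x := rfl
  left_inv x := rfl
  right_inv x := rfl

/-- For `M(y, z) = (L y, L z − y)` with the eigenspace of `L` at `λ` equal to its second
generalized eigenspace, the geometric multiplicity of `λ` for `M` equals that for `L`,
while the second generalized eigenspace of `M` has twice the dimension. -/
theorem multiplicities_block_triangular (V : Type*) [AddCommGroup V] [Module ℂ V]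
    [FiniteDimensional ℂ V] (L : V →ₗ[ℂ] V) (lam : ℂ)
    (hL : LinearMap.ker ((lam • LinearMap.id - L) ∘ₗ (lam • LinearMap.id - L)) =
      LinearMap.ker (lam • LinearMap.id - L))
    (M : V × V →ₗ[ℂ] V × V)
    (hM : ∀ p : V × V, M p = (L p.1, L p.2 - p.1)) :
    Module.finrank ℂ (LinearMap.ker (lam • LinearMap.id - M)) =
      Module.finrank ℂ (LinearMap.ker (lam • LinearMap.id - L)) ∧
    Module.finrank ℂ
        (LinearMap.ker ((lam • LinearMap.id - M) ∘ₗ (lam • LinearMap.id - M))) =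
      2 * Module.finrank ℂ (LinearMap.ker (lam • LinearMap.id - L)) := by
  set A : V →ₗ[ℂ] V := lam • LinearMap.id - L with hA
  set N : V × V →ₗ[ℂ] V × V := lam • LinearMap.id - M with hNdef
  have key : ∀ v : V, A (A v) = 0 → A v = 0 := by
    intro v hv
    have : v ∈ LinearMap.ker (A ∘ₗ A) := by simpa [LinearMap.mem_ker] using hv
    rw [hL] at this
    simpa [LinearMap.mem_ker] using this
  have hN : ∀ p : V × V, N p = (A p.1, A p.2 + p.1) := by
    intro p
    simp [hNdef, hA, hM p, Prod.ext_iff, Prod.smul_def]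
    abel
  have hker1 : LinearMap.ker N = (⊥ : Submodule ℂ V).prod (LinearMap.ker A) := by
    ext ⟨y, z⟩
    simp only [LinearMap.mem_ker, Submodule.mem_prod, Submodule.mem_bot, hN, Prod.mk_eq_zero]
    constructor
    · rintro ⟨h1, h2⟩
      have hy : y = -A z := eq_neg_of_add_eq_zero_right h2
      have : A (A z) = 0 := by
        have := congrArg A hy
        simpa [h1] using this.symm
      have hz := key z this
      exact ⟨by simp [hy, hz], hz⟩
    · rintro ⟨h1, h2⟩
      exact ⟨by simp [h1], by simp [h1, h2]⟩
  have hker2 : LinearMap.ker (N ∘ₗ N) =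
      (LinearMap.ker A).prod (LinearMap.ker A) := by
    ext ⟨y, z⟩
    have hNN : (N ∘ₗ N) (y, z) = (A (A y), A (A z + y) + A y) := by
      rw [LinearMap.comp_apply, hN, hN]
    simp only [LinearMap.mem_ker, Submodule.mem_prod, hNN, Prod.mk_eq_zero]
    constructor
    · rintro ⟨h1, h2⟩
      have hy : A y = 0 := key y h1
      have : A (A z) = 0 := by
        have := h2
        rw [map_add, hy] at this
        simpa using this
      exact ⟨hy, key z this⟩
    · rintro ⟨h1, h2⟩
      refine ⟨by simp [h1], ?_⟩
      rw [map_add, h1, h2]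
      simp
  constructor
  · rw [hker1]
    rw [(submoduleProdEquiv _ _).finrank_eq, Module.finrank_prod]
    simp
  · rw [hker2]
    rw [(submoduleProdEquiv _ _).finrank_eq, Module.finrank_prod]
    ring
end

section
/- Let A be an n×n complex matrix, V an n×K complex matrix, and define the (n+K)×(n+K) block matrix 𝔸 = [[A, V],[0, 0]] and the (n+K)×K block matrix 𝕍 = [[0],[I_K]]. If for every λ ∈ ℂ every vector ε ∈ ℂⁿ with Aᴴε = λε and Vᴴε = 0 is zero, then for every λ ∈ ℂ every vector η ∈ ℂ^{n+K} with 𝔸ᴴη = λη and 𝕍ᴴη = 0 is zero. -/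
open Matrix

/-- If `(A, V)` satisfies the Hautus eigenvector test, then so does the extended pair
`(𝔸, 𝕍)` with `𝔸 = [[A, V], [0, 0]]` and `𝕍 = [[0], [I]]`. -/
theorem hautus_extended_system (n K : ℕ)
    (A : Matrix (Fin n) (Fin n) ℂ) (V : Matrix (Fin n) (Fin K) ℂ)
    (hA : ∀ (lam : ℂ) (ε : Fin n → ℂ),
      Aᴴ.mulVec ε = lam • ε → Vᴴ.mulVec ε = 0 → ε = 0) :
    ∀ (lam : ℂ) (η : Fin n ⊕ Fin K → ℂ),
      (Matrix.fromBlocks A V 0 0)ᴴ.mulVec η = lam • η →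
      (Matrix.of fun (i : Fin n ⊕ Fin K) (j : Fin K) =>
          Sum.elim (fun _ : Fin n => (0 : ℂ))
            (fun k : Fin K => if k = j then 1 else 0) i)ᴴ.mulVec η = 0 →
      η = 0 := by
  intro lam η h1 h2
  -- η on the inr part vanishes
  have hu : ∀ k : Fin K, η (Sum.inr k) = 0 := by
    intro k
    have := congrFun h2 k
    simpa [Matrix.mulVec, dotProduct, Fintype.sum_sum_type,
      Matrix.conjTranspose_apply, apply_ite (starRingEnd ℂ)] using this
  set ε : Fin n → ℂ := fun i => η (Sum.inl i) with hε
  have hAe : Aᴴ.mulVec ε = lam • ε := by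
    funext i
    have := congrFun h1 (Sum.inl i)
    simpa [Matrix.mulVec, dotProduct, Fintype.sum_sum_type,
      Matrix.conjTranspose_apply, Matrix.fromBlocks, hu, hε] using this
  have hVe : Vᴴ.mulVec ε = 0 := by
    funext k
    have := congrFun h1 (Sum.inr k)
    simpa [Matrix.mulVec, dotProduct, Fintype.sum_sum_type,
      Matrix.conjTranspose_apply, Matrix.fromBlocks, hu, hε] using this
  have hε0 := hA lam ε hAe hVe
  funext i
  cases i with
  | inl i => exact congrFun hε0 i
  | inr k => exact hu k
end
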